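/- Fix ε∈Char_ℝ(Q⁺). Then the complex vector space g_ε={(S_ε⁺(z),S_ε⁻(z)) : z∈g} is a Lie *-subalgebra of the direct sum Lie algebra g⊕g equipped with the involution (w,z)^*=(z^†,w^†); moreover dim_ℂ(g_ε)=dim_ℂ(g). -/

import Mathlib

/-!
`S_ε^±` act diagonally on the root basis: `X_α^+` is a joint eigenvector with eigenvalues
`(ε_α, 1)`, `X_α^-` with `(1, ε_α)` and `h_r` with `(1, 1)`. For two basis vectors with
eigenvalues `(a, a')`, `(b, b')` whose bracket has eigenvalues `(s, s')`, multiplicativity of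
`ε` on `Q⁺` gives a common factor `c` with `a b = c s` and `a' b' = c s'`, so the bracket of
their images in `g ⊕ g` is the image of `c` times their bracket; bilinearity extends this to all
of `g`. Since `†` swaps `X_α^+` and `X_α^-`, fixes `h` and `ε_α` is real,
`† ∘ S_ε^∓ = S_ε^± ∘ †`. Finally every basis vector is fixed by `S_ε^+` or by `S_ε^-`, so
`z ↦ (S_ε^+ z, S_ε^- z)` is injective.
-/

section Graph

variable {R M L : Type*} [CommRing R] [AddCommGroup M] [Module R M] [LieRing L] [LieAlgebra R L]

theorem lie_mem_of_forall_basis {ι : Type*} (G : M →ₗ[R] L) (b : Module.Basis ι R M)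
    {p : Submodule R L} (h : ∀ i j, ⁅G (b i), G (b j)⁆ ∈ p) (x y : M) : ⁅G x, G y⁆ ∈ p := by
  have hB : ((LieModule.toEnd R L L : L →ₗ[R] Module.End R L).compl₁₂ G G).compr₂ p.mkQ = 0 :=
    LinearMap.ext_basis b b fun i j => by simpa [Submodule.Quotient.mk_eq_zero] using h i j
  simpa [Submodule.Quotient.mk_eq_zero] using congr($hB x y)

theorem lie_mem_range_prod_iff (Sp Sm : M →ₗ[R] L) (x y : M) :
    ⁅(Sp.prod Sm) x, (Sp.prod Sm) y⁆ ∈ LinearMap.range (Sp.prod Sm) ↔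
      ∃ u, ⁅Sp x, Sp y⁆ = Sp u ∧ ⁅Sm x, Sm y⁆ = Sm u := by
  simp [Prod.ext_iff, eq_comm]

end Graph

section JointEigen

variable {R L : Type*} [CommRing R] [LieRing L] [LieAlgebra R L] {Sp Sm : L →ₗ[R] L}

theorem exists_lie_eq_of_eigen {x y : L} {a a' b b' s s' : R}
    (hx : Sp x = a • x) (hx' : Sm x = a' • x) (hy : Sp y = b • y) (hy' : Sm y = b' • y) (c : R)
    (hz : Sp ⁅x, y⁆ = s • ⁅x, y⁆) (hz' : Sm ⁅x, y⁆ = s' • ⁅x, y⁆)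
    (hc : a * b = c * s) (hc' : a' * b' = c * s') :
    ∃ u, ⁅Sp x, Sp y⁆ = Sp u ∧ ⁅Sm x, Sm y⁆ = Sm u :=
  ⟨c • ⁅x, y⁆,
    by rw [hx, hy, smul_lie, lie_smul, smul_smul, map_smul, hz, smul_smul, hc],
    by rw [hx', hy', smul_lie, lie_smul, smul_smul, map_smul, hz', smul_smul, hc']⟩

theorem exists_lie_eq_of_fixed_of_eigen {x y : L} {b b' t : R}
    (hx : Sp x = x) (hx' : Sm x = x) (hy : Sp y = b • y) (hy' : Sm y = b' • y)
    (hxy : ⁅x, y⁆ = t • y) : ∃ u, ⁅Sp x, Sp y⁆ = Sp u ∧ ⁅Sm x, Sm y⁆ = Sm u :=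
  exists_lie_eq_of_eigen (a := 1) (a' := 1) (by rw [hx, one_smul]) (by rw [hx', one_smul]) hy hy' 1
    (by rw [hxy, map_smul, hy, smul_comm]) (by rw [hxy, map_smul, hy', smul_comm])
    (by ring) (by ring)

theorem exists_lie_eq_swap {x y : L} (h : ∃ u, ⁅Sp x, Sp y⁆ = Sp u ∧ ⁅Sm x, Sm y⁆ = Sm u) :
    ∃ u, ⁅Sp y, Sp x⁆ = Sp u ∧ ⁅Sm y, Sm x⁆ = Sm u := by
  obtain ⟨u, hu, hu'⟩ := h
  exact ⟨-u, by rw [← lie_skew, hu, map_neg], by rw [← lie_skew, hu', map_neg]⟩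

end JointEigen

section RootVectors

variable {R L P Q : Type*} [CommRing R] [LieRing L] [LieAlgebra R L] [Add Q]
  {Sp Sm : L →ₗ[R] L} {Xp Xm : P → L} {e : P → R} {coord : P → Q}

theorem exists_lie_Xp_Xp (hSp_Xp : ∀ α, Sp (Xp α) = e α • Xp α) (hSm_Xp : ∀ α, Sm (Xp α) = Xp α)
    (he : ∀ α β γ, coord γ = coord α + coord β → e γ = e α * e β) {α β : P}
    (hpp : (∃ γ, ∃ N : R, coord γ = coord α + coord β ∧ ⁅Xp α, Xp β⁆ = N • Xp γ) ∨
      ⁅Xp α, Xp β⁆ = 0) :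
    ∃ u, ⁅Sp (Xp α), Sp (Xp β)⁆ = Sp u ∧ ⁅Sm (Xp α), Sm (Xp β)⁆ = Sm u := by
  have hSm_Xp' : ∀ α, Sm (Xp α) = (1 : R) • Xp α := fun α => by rw [hSm_Xp, one_smul]
  rcases hpp with ⟨γ, N, hγ, hbr⟩ | hbr
  · refine exists_lie_eq_of_eigen (hSp_Xp α) (hSm_Xp' α) (hSp_Xp β) (hSm_Xp' β) 1
      (s := e γ) (s' := 1) ?_ ?_ (by rw [he α β γ hγ, one_mul]) (by ring) <;>
      rw [hbr, map_smul, smul_comm] <;> simp only [hSp_Xp, hSm_Xp']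
  · exact exists_lie_eq_of_eigen (hSp_Xp α) (hSm_Xp' α) (hSp_Xp β) (hSm_Xp' β) 1
      (s := e α * e β) (s' := 1) (by simp [hbr]) (by simp [hbr]) (by ring) (by ring)

theorem exists_lie_Xp_Xm {ι : Type*} {hvec : ι → L}
    (hSp_Xp : ∀ α, Sp (Xp α) = e α • Xp α) (hSp_Xm : ∀ α, Sp (Xm α) = Xm α)
    (hSp_h : ∀ r, Sp (hvec r) = hvec r)
    (hSm_Xm : ∀ α, Sm (Xm α) = e α • Xm α) (hSm_Xp : ∀ α, Sm (Xp α) = Xp α)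
    (hSm_h : ∀ r, Sm (hvec r) = hvec r)
    (he : ∀ α β γ, coord γ = coord α + coord β → e γ = e α * e β) {α β : P}
    (hpm : (α = β ∧ ⁅Xp α, Xm β⁆ ∈ Submodule.span R (Set.range hvec)) ∨
      (∃ γ, ∃ N : R, coord α = coord β + coord γ ∧ ⁅Xp α, Xm β⁆ = N • Xp γ) ∨
      (∃ γ, ∃ N : R, coord β = coord α + coord γ ∧ ⁅Xp α, Xm β⁆ = N • Xm γ) ∨
      ⁅Xp α, Xm β⁆ = 0) :
    ∃ u, ⁅Sp (Xp α), Sp (Xm β)⁆ = Sp u ∧ ⁅Sm (Xp α), Sm (Xm β)⁆ = Sm u := by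
  have hSp_Xm' : ∀ α, Sp (Xm α) = (1 : R) • Xm α := fun α => by rw [hSp_Xm, one_smul]
  have hSm_Xp' : ∀ α, Sm (Xp α) = (1 : R) • Xp α := fun α => by rw [hSm_Xp, one_smul]
  have hx := hSp_Xp α
  have hx' := hSm_Xp' α
  have hy := hSp_Xm' β
  have hy' := hSm_Xm β
  rcases hpm with ⟨rfl, hmem⟩ | ⟨γ, N, hγ, hbr⟩ | ⟨γ, N, hγ, hbr⟩ | hbr
  · have hfix (S : L →ₗ[R] L) (hS : ∀ r, S (hvec r) = hvec r) :
        S ⁅Xp α, Xm α⁆ = (1 : R) • ⁅Xp α, Xm α⁆ := by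
      rw [one_smul]
      exact LinearMap.eqOn_span (g := LinearMap.id) (by rintro _ ⟨r, rfl⟩; exact hS r) hmem
    exact exists_lie_eq_of_eigen hx hx' hy hy' (e α) (hfix Sp hSp_h) (hfix Sm hSm_h)
      (by ring) (by ring)
  · refine exists_lie_eq_of_eigen hx hx' hy hy' (e β) (s := e γ) (s' := 1) ?_ ?_
      (by rw [he β γ α hγ, mul_one]) (by ring) <;>
      rw [hbr, map_smul, smul_comm] <;> simp only [hSp_Xp, hSm_Xp']
  · refine exists_lie_eq_of_eigen hx hx' hy hy' (e α) (s := 1) (s' := e γ) ?_ ?_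
      (by ring) (by rw [he α γ β hγ, one_mul]) <;>
      rw [hbr, map_smul, smul_comm] <;> simp only [hSp_Xm', hSm_Xm]
  · exact exists_lie_eq_of_eigen hx hx' hy hy' 1 (s := e α) (s' := e β)
      (by simp [hbr]) (by simp [hbr]) (by ring) (by ring)

theorem exists_lie_eq_rootBasis {ι : Type*} {hvec : ι → L} {bas : Module.Basis ((P ⊕ P) ⊕ ι) R L}
    (hbas : ∀ i, bas i = Sum.elim (Sum.elim Xp Xm) hvec i) (h_comm : ∀ r s, ⁅hvec r, hvec s⁆ = 0)
    {rt : P → ι → R}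
    (hrt : ∀ α r, ⁅hvec r, Xp α⁆ = rt α r • Xp α ∧ ⁅hvec r, Xm α⁆ = -(rt α r) • Xm α)
    (hpp : ∀ α β, (∃ γ, ∃ N : R, coord γ = coord α + coord β ∧ ⁅Xp α, Xp β⁆ = N • Xp γ)
      ∨ ⁅Xp α, Xp β⁆ = 0)
    (hmm : ∀ α β, (∃ γ, ∃ N : R, coord γ = coord α + coord β ∧ ⁅Xm α, Xm β⁆ = N • Xm γ)
      ∨ ⁅Xm α, Xm β⁆ = 0)
    (hpm : ∀ α β,
      (α = β ∧ ⁅Xp α, Xm β⁆ ∈ Submodule.span R (Set.range hvec)) ∨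
      (∃ γ, ∃ N : R, coord α = coord β + coord γ ∧ ⁅Xp α, Xm β⁆ = N • Xp γ) ∨
      (∃ γ, ∃ N : R, coord β = coord α + coord γ ∧ ⁅Xp α, Xm β⁆ = N • Xm γ) ∨
      ⁅Xp α, Xm β⁆ = 0)
    (hSp_Xp : ∀ α, Sp (Xp α) = e α • Xp α) (hSp_Xm : ∀ α, Sp (Xm α) = Xm α)
    (hSp_h : ∀ r, Sp (hvec r) = hvec r)
    (hSm_Xm : ∀ α, Sm (Xm α) = e α • Xm α) (hSm_Xp : ∀ α, Sm (Xp α) = Xp α)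
    (hSm_h : ∀ r, Sm (hvec r) = hvec r)
    (he : ∀ α β γ, coord γ = coord α + coord β → e γ = e α * e β) (i j : (P ⊕ P) ⊕ ι) :
    ∃ u, ⁅Sp (bas i), Sp (bas j)⁆ = Sp u ∧ ⁅Sm (bas i), Sm (bas j)⁆ = Sm u := by
  have hSp_Xm' α : Sp (Xm α) = (1 : R) • Xm α := by rw [hSp_Xm, one_smul]
  have hSm_Xp' α : Sm (Xp α) = (1 : R) • Xp α := by rw [hSm_Xp, one_smul]
  have hXp r β := exists_lie_eq_of_fixed_of_eigen (hSp_h r) (hSm_h r) (hSp_Xp β) (hSm_Xp' β)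
    (hrt β r).1
  have hXm r β := exists_lie_eq_of_fixed_of_eigen (hSp_h r) (hSm_h r) (hSp_Xm' β) (hSm_Xm β)
    (hrt β r).2
  have hpm' α β := exists_lie_Xp_Xm hSp_Xp hSp_Xm hSp_h hSm_Xm hSm_Xp hSm_h he (hpm α β)
  rcases i with (α | α) | r <;> rcases j with (β | β) | s <;>
    simp only [hbas, Sum.elim_inl, Sum.elim_inr]
  · exact exists_lie_Xp_Xp hSp_Xp hSm_Xp he (hpp α β)
  · exact hpm' α β
  · exact exists_lie_eq_swap (hXp s α)
  · exact exists_lie_eq_swap (hpm' β α)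
  · exact (exists_lie_Xp_Xp hSm_Xm hSp_Xm he (hmm α β)).imp fun _ => And.symm
  · exact exists_lie_eq_swap (hXm s α)
  · exact hXp r β
  · exact hXm r β
  · exact ⟨0, by simp [hSp_h, hSm_h, h_comm]⟩

end RootVectors

section Diagonal

variable {R M ι : Type*} [CommRing R] [AddCommGroup M] [Module R M]

theorem Module.Basis.repr_apply_of_eigen (b : Module.Basis ι R M) {S : M →ₗ[R] M} {s : ι → R}
    (hS : ∀ i, S (b i) = s i • b i) (x : M) (i : ι) : b.repr (S x) i = s i * b.repr x i := by
  have hcoord : (b.coord i).comp S = s i • b.coord i := b.ext fun j => by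
    by_cases hji : j = i
    · subst hji; simp [hS]
    · simp [hS, Ne.symm hji]
  simpa using congr($hcoord x)

theorem injective_prod_of_eigen [NoZeroDivisors R] (b : Module.Basis ι R M) {Sp Sm : M →ₗ[R] M}
    {sp sm : ι → R} (hSp : ∀ i, Sp (b i) = sp i • b i) (hSm : ∀ i, Sm (b i) = sm i • b i)
    (hne : ∀ i, sp i ≠ 0 ∨ sm i ≠ 0) : Function.Injective (Sp.prod Sm) := by
  rw [← LinearMap.ker_eq_bot, LinearMap.ker_prod, eq_bot_iff]
  rintro x ⟨hpx, hmx⟩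
  rw [Submodule.mem_bot, b.ext_elem_iff]
  intro i
  have hp := b.repr_apply_of_eigen hSp x i
  have hm := b.repr_apply_of_eigen hSm x i
  simp only [LinearMap.mem_ker.1 hpx, LinearMap.mem_ker.1 hmx, map_zero, Finsupp.zero_apply,
    zero_eq_mul] at hp hm ⊢
  exact (hne i).elim hp.resolve_left hm.resolve_left

end Diagonal

section RootBasis

variable {R S L M P ι : Type*} [CommRing R] [CommRing S] [LieRing L] [LieAlgebra R L]
  [AddCommGroup M] [Module S M] {Xp Xm : P → L} {hvec : ι → L}
  {bas : Module.Basis ((P ⊕ P) ⊕ ι) R L}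

theorem ext_rootBasis (hbas : ∀ i, bas i = Sum.elim (Sum.elim Xp Xm) hvec i) {σ : R →+* S}
    {f g : L →ₛₗ[σ] M} (hp : ∀ α, f (Xp α) = g (Xp α)) (hm : ∀ α, f (Xm α) = g (Xm α))
    (hh : ∀ r, f (hvec r) = g (hvec r)) : f = g :=
  bas.ext <| by rintro ((α | α) | r) <;> simp [hbas, hp, hm, hh]

theorem injective_prod_of_rootBasis [IsDomain R]
    (hbas : ∀ i, bas i = Sum.elim (Sum.elim Xp Xm) hvec i) {Sp Sm : L →ₗ[R] L} {e : P → R}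
    (hSp_Xp : ∀ α, Sp (Xp α) = e α • Xp α) (hSp_Xm : ∀ α, Sp (Xm α) = Xm α)
    (hSp_h : ∀ r, Sp (hvec r) = hvec r)
    (hSm_Xm : ∀ α, Sm (Xm α) = e α • Xm α) (hSm_Xp : ∀ α, Sm (Xp α) = Xp α)
    (hSm_h : ∀ r, Sm (hvec r) = hvec r) : Function.Injective (Sp.prod Sm) :=
  injective_prod_of_eigen bas (sp := Sum.elim (Sum.elim e 1) 1) (sm := Sum.elim (Sum.elim 1 e) 1)
    (by rintro ((α | α) | r) <;> simp [hbas, hSp_Xp, hSp_Xm, hSp_h])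
    (by rintro ((α | α) | r) <;> simp [hbas, hSm_Xp, hSm_Xm, hSm_h])
    (by rintro ((α | α) | r) <;> simp)

end RootBasis

theorem exists_dag_eq {L P ι : Type*} [LieRing L] [LieAlgebra ℂ L] {Xp Xm : P → L} {hvec : ι → L}
    {bas : Module.Basis ((P ⊕ P) ⊕ ι) ℂ L} (hbas : ∀ i, bas i = Sum.elim (Sum.elim Xp Xm) hvec i)
    (D : L →ₗ⋆[ℂ] L) (hD_Xp : ∀ α, D (Xp α) = Xm α) (hD_Xm : ∀ α, D (Xm α) = Xp α)
    (hD_h : ∀ r, D (hvec r) = hvec r) {Sp Sm : L →ₗ[ℂ] L} {e : P → ℝ}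
    (hSp_Xp : ∀ α, Sp (Xp α) = (e α : ℂ) • Xp α) (hSp_Xm : ∀ α, Sp (Xm α) = Xm α)
    (hSp_h : ∀ r, Sp (hvec r) = hvec r)
    (hSm_Xm : ∀ α, Sm (Xm α) = (e α : ℂ) • Xm α) (hSm_Xp : ∀ α, Sm (Xp α) = Xp α)
    (hSm_h : ∀ r, Sm (hvec r) = hvec r) (z : L) :
    ∃ u, D (Sm z) = Sp u ∧ D (Sp z) = Sm u := by
  have hm : D.comp Sm = Sp.comp D := ext_rootBasis hbas
    (by simp [hD_Xp, hSm_Xp, hSp_Xm])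
    (fun α => by
      simp only [LinearMap.comp_apply, hSm_Xm, map_smulₛₗ, hD_Xm, Complex.conj_ofReal, hSp_Xp])
    (by simp [hD_h, hSm_h, hSp_h])
  have hp : D.comp Sp = Sm.comp D := ext_rootBasis hbas
    (fun α => by
      simp only [LinearMap.comp_apply, hSp_Xp, map_smulₛₗ, hD_Xp, Complex.conj_ofReal, hSm_Xm])
    (by simp [hD_Xm, hSp_Xm, hSm_Xp]) (by simp [hD_h, hSm_h, hSp_h])
  exact ⟨D z, congr($hm z), congr($hp z)⟩

theorem statement19_general
    (l : ℕ)
    -- the set Δ⁺ of positive roots, with coordinates in terms of the simple roots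
    (PosRoot : Type)
    (coord : PosRoot → Fin l → ℕ)
    -- the complex simple Lie algebra g with its root space decomposition
    (L : Type) [LieRing L] [LieAlgebra ℂ L]
    (Xp Xm : PosRoot → L) (hvec : Fin l → L)
    (bas : Module.Basis ((PosRoot ⊕ PosRoot) ⊕ Fin l) ℂ L)
    (hbas : ∀ i, bas i = Sum.elim (Sum.elim Xp Xm) hvec i)
    (h_comm : ∀ r s, ⁅hvec r, hvec s⁆ = 0)
    (root_eigen : ∃ rt : PosRoot → Fin l → ℂ, ∀ α r,
      ⁅hvec r, Xp α⁆ = rt α r • Xp α ∧ ⁅hvec r, Xm α⁆ = -(rt α r) • Xm α)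
    (hpp : ∀ α β, (∃ γ, ∃ N : ℂ, coord γ = coord α + coord β ∧ ⁅Xp α, Xp β⁆ = N • Xp γ)
      ∨ ⁅Xp α, Xp β⁆ = 0)
    (hmm : ∀ α β, (∃ γ, ∃ N : ℂ, coord γ = coord α + coord β ∧ ⁅Xm α, Xm β⁆ = N • Xm γ)
      ∨ ⁅Xm α, Xm β⁆ = 0)
    (hpm : ∀ α β,
      (α = β ∧ ⁅Xp α, Xm β⁆ ∈ Submodule.span ℂ (Set.range hvec)) ∨
      (∃ γ, ∃ N : ℂ, coord α = coord β + coord γ ∧ ⁅Xp α, Xm β⁆ = N • Xp γ) ∨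
      (∃ γ, ∃ N : ℂ, coord β = coord α + coord γ ∧ ⁅Xp α, Xm β⁆ = N • Xm γ) ∨
      ⁅Xp α, Xm β⁆ = 0)
    -- the compact-form involution †
    (dag : L → L)
    (dag_add : ∀ x y, dag (x + y) = dag x + dag y)
    (dag_smul : ∀ (c : ℂ) (x : L), dag (c • x) = (starRingEnd ℂ c) • dag x)
    (dag_invol : ∀ x, dag (dag x) = x)
    (dag_Xp : ∀ α, dag (Xp α) = Xm α)
    (dag_h : ∀ r, dag (hvec r) = hvec r)
    -- the character ε and the maps S_ε^±
    (ε : Fin l → ℝ)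
    (Sp Sm : L →ₗ[ℂ] L)
    (hSp_Xp : ∀ α, Sp (Xp α) = (((∏ r, ε r ^ (coord α r) : ℝ)) : ℂ) • Xp α)
    (hSp_Xm : ∀ α, Sp (Xm α) = Xm α) (hSp_h : ∀ r, Sp (hvec r) = hvec r)
    (hSm_Xm : ∀ α, Sm (Xm α) = (((∏ r, ε r ^ (coord α r) : ℝ)) : ℂ) • Xm α)
    (hSm_Xp : ∀ α, Sm (Xp α) = Xp α) (hSm_h : ∀ r, Sm (hvec r) = hvec r) :
    -- g_ε is closed under the (componentwise) Lie bracket of g ⊕ g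
    (∀ z w : L, ∃ u : L, ⁅Sp z, Sp w⁆ = Sp u ∧ ⁅Sm z, Sm w⁆ = Sm u) ∧
    -- g_ε is closed under the involution (w,z)^* = (z†,w†)
    (∀ z : L, ∃ u : L, dag (Sm z) = Sp u ∧ dag (Sp z) = Sm u) ∧
    -- dim_ℂ(g_ε) = dim_ℂ(g)
    Module.finrank ℂ ↥(LinearMap.range (LinearMap.prod Sp Sm)) = Module.finrank ℂ L := by
  obtain ⟨rt, hrt⟩ := root_eigen
  set e : PosRoot → ℝ := fun α => ∏ r, ε r ^ coord α r
  have he : ∀ α β γ, coord γ = coord α + coord β → (e γ : ℂ) = e α * e β := by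
    intro α β γ h
    simp only [e, h, Pi.add_apply, pow_add, Finset.prod_mul_distrib, Complex.ofReal_mul]
  have hbracket := exists_lie_eq_rootBasis hbas h_comm hrt hpp hmm hpm hSp_Xp hSp_Xm hSp_h hSm_Xm
    hSm_Xp hSm_h he
  let D : L →ₗ⋆[ℂ] L := { toFun := dag, map_add' := dag_add, map_smul' := dag_smul }
  have hD_Xm α : dag (Xm α) = Xp α := by rw [← dag_Xp, dag_invol]
  refine ⟨fun z w => (lie_mem_range_prod_iff Sp Sm z w).1 <| lie_mem_of_forall_basis _ bas
      (fun i j => (lie_mem_range_prod_iff Sp Sm _ _).2 (hbracket i j)) z w,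
    exists_dag_eq hbas D dag_Xp hD_Xm dag_h hSp_Xp hSp_Xm hSp_h hSm_Xm hSm_Xp hSm_h,
    LinearMap.finrank_range_of_inj <|
      injective_prod_of_rootBasis hbas hSp_Xp hSp_Xm hSp_h hSm_Xm hSm_Xp hSm_h⟩

/-- let `g` be a complex simple Lie algebra with Cartan decomposition
`g = n⁻ ⊕ h ⊕ n⁺`, compact-form involution `†`, root vectors `X_α^±` (for `α ∈ Δ⁺`,
with coordinates `coord α` in the simple roots) and `{h_r}` the basis of `h` dual to
the fundamental weights, and let `ε ∈ Char_ℝ(Q⁺)`.  With `S_ε^±` the linear maps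
scaling `X_α^±` by `ε_α = ∏_r ε_r^{(coord α)_r}` and fixing `h + n^∓`, the space
`g_ε = {(S_ε⁺ z, S_ε⁻ z) : z ∈ g}` is a Lie `*`-subalgebra of `g ⊕ g` for the
involution `(w,z)^* = (z^†, w^†)`, and `dim_ℂ g_ε = dim_ℂ g`.  (Closure under the
componentwise bracket and the involution is expressed pointwise, and `g_ε` is the
range of `z ↦ (S_ε⁺ z, S_ε⁻ z)`.) -/
theorem statement19
    (l : ℕ) (hl : 0 < l)
    -- the set Δ⁺ of positive roots, with coordinates in terms of the simple roots
    (PosRoot : Type) [Fintype PosRoot]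
    (simp_root : Fin l → PosRoot)
    (coord : PosRoot → Fin l → ℕ)
    (hcoord_simple : ∀ r, coord (simp_root r) = Pi.single r 1)
    (hcoord_inj : Function.Injective coord)
    -- the complex simple Lie algebra g with its root space decomposition
    (L : Type) [LieRing L] [LieAlgebra ℂ L]
    (Xp Xm : PosRoot → L) (hvec : Fin l → L)
    (bas : Module.Basis ((PosRoot ⊕ PosRoot) ⊕ Fin l) ℂ L)
    (hbas : ∀ i, bas i = Sum.elim (Sum.elim Xp Xm) hvec i)
    (hsimple_bracket : ∀ r, ⁅Xp (simp_root r), Xm (simp_root r)⁆ = hvec r)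
    (h_comm : ∀ r s, ⁅hvec r, hvec s⁆ = 0)
    (root_eigen : ∃ rt : PosRoot → Fin l → ℂ, ∀ α r,
      ⁅hvec r, Xp α⁆ = rt α r • Xp α ∧ ⁅hvec r, Xm α⁆ = -(rt α r) • Xm α)
    (hpp : ∀ α β, (∃ γ, ∃ N : ℂ, coord γ = coord α + coord β ∧ ⁅Xp α, Xp β⁆ = N • Xp γ)
      ∨ ⁅Xp α, Xp β⁆ = 0)
    (hmm : ∀ α β, (∃ γ, ∃ N : ℂ, coord γ = coord α + coord β ∧ ⁅Xm α, Xm β⁆ = N • Xm γ)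
      ∨ ⁅Xm α, Xm β⁆ = 0)
    (hpm : ∀ α β,
      (α = β ∧ ⁅Xp α, Xm β⁆ ∈ Submodule.span ℂ (Set.range hvec)) ∨
      (∃ γ, ∃ N : ℂ, coord α = coord β + coord γ ∧ ⁅Xp α, Xm β⁆ = N • Xp γ) ∨
      (∃ γ, ∃ N : ℂ, coord β = coord α + coord γ ∧ ⁅Xp α, Xm β⁆ = N • Xm γ) ∨
      ⁅Xp α, Xm β⁆ = 0)
    -- the compact-form involution †
    (dag : L → L)
    (dag_add : ∀ x y, dag (x + y) = dag x + dag y)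
    (dag_smul : ∀ (c : ℂ) (x : L), dag (c • x) = (starRingEnd ℂ c) • dag x)
    (dag_bracket : ∀ x y, dag ⁅x, y⁆ = -⁅dag x, dag y⁆)
    (dag_invol : ∀ x, dag (dag x) = x)
    (dag_Xp : ∀ α, dag (Xp α) = Xm α)
    (dag_h : ∀ r, dag (hvec r) = hvec r)
    -- the character ε and the maps S_ε^±
    (ε : Fin l → ℝ)
    (Sp Sm : L →ₗ[ℂ] L)
    (hSp_Xp : ∀ α, Sp (Xp α) = (((∏ r, ε r ^ (coord α r) : ℝ)) : ℂ) • Xp α)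
    (hSp_Xm : ∀ α, Sp (Xm α) = Xm α) (hSp_h : ∀ r, Sp (hvec r) = hvec r)
    (hSm_Xm : ∀ α, Sm (Xm α) = (((∏ r, ε r ^ (coord α r) : ℝ)) : ℂ) • Xm α)
    (hSm_Xp : ∀ α, Sm (Xp α) = Xp α) (hSm_h : ∀ r, Sm (hvec r) = hvec r) :
    -- g_ε is closed under the (componentwise) Lie bracket of g ⊕ g
    (∀ z w : L, ∃ u : L, ⁅Sp z, Sp w⁆ = Sp u ∧ ⁅Sm z, Sm w⁆ = Sm u) ∧
    -- g_ε is closed under the involution (w,z)^* = (z†,w†)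
    (∀ z : L, ∃ u : L, dag (Sm z) = Sp u ∧ dag (Sp z) = Sm u) ∧
    -- dim_ℂ(g_ε) = dim_ℂ(g)
    Module.finrank ℂ ↥(LinearMap.range (LinearMap.prod Sp Sm)) = Module.finrank ℂ L :=
  statement19_general l PosRoot coord L Xp Xm hvec bas hbas h_comm root_eigen hpp hmm hpm dag
    dag_add dag_smul dag_invol dag_Xp dag_h ε Sp Sm hSp_Xp hSp_Xm hSp_h hSm_Xm hSm_Xp hSm_h
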